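/- arXiv:0809.4443 — 12 statements merged into one kernel-verified Lean document; each statement's English description precedes it below -/
import Mathlib

section
/- Let k be a field of characteristic p > 0 and r a nonnegative integer. Define β(x,y) = Σ_{i=1}^{p-1} (1/p)·C(p,i) · x^{i·p^r} · y^{(p−i)·p^r}, where (1/p)·C(p,i) denotes the integer C(p,i)/p (the binomial coefficient C(p,i) is divisible by p for 0 < i < p). Then β is a symmetric 2-cocycle on the additive group of k: β(x,y) = β(y,x) and δ²(β) = 0. -/
open Finset

/-- The second coboundary operator on 2-cochains for the additive group. -/
def delta2 {k : Type*} [CommRing k] (β : k × k → k) (z₁ z₂ z₃ : k) : k :=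
  β (z₁, z₂) + β (z₁ + z₂, z₃) - β (z₂, z₃) - β (z₁, z₂ + z₃)

/-- The element-level Witt sum. -/
def Bsum {R : Type*} [CommRing R] (p : ℕ) (x y : R) : R :=
  ∑ i ∈ Finset.Ioo 0 p, ((p.choose i / p : ℕ) : R) * x ^ i * y ^ (p - i)

lemma Bsum_symm {R : Type*} [CommRing R] (p : ℕ) (x y : R) :
    Bsum p x y = Bsum p y x := by
  unfold Bsum
  refine Finset.sum_nbij' (fun i => p - i) (fun i => p - i) ?_ ?_ ?_ ?_ ?_
  · intro i hi
    simp only [Finset.mem_Ioo] at *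
    omega
  · intro i hi
    simp only [Finset.mem_Ioo] at *
    omega
  · intro i hi
    simp only [Finset.mem_Ioo] at hi
    omega
  · intro i hi
    simp only [Finset.mem_Ioo] at hi
    omega
  · intro i hi
    simp only [Finset.mem_Ioo] at hi
    rw [Nat.choose_symm (by omega), Nat.sub_sub_self (by omega)]
    ring

lemma map_Bsum {R S : Type*} [CommRing R] [CommRing S] (f : R →+* S) (p : ℕ) (x y : R) :
    f (Bsum p x y) = Bsum p (f x) (f y) := by
  unfold Bsum
  rw [map_sum]
  simp [map_mul, map_pow]

lemma p_mul_Bsum {R : Type*} [CommRing R] (p : ℕ) (hp : p.Prime) (x y : R) :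
    (p : R) * Bsum p x y = (x + y) ^ p - x ^ p - y ^ p := by
  unfold Bsum
  rw [Finset.mul_sum, add_pow]
  have h : ∀ i ∈ Finset.Ioo 0 p, (p : R) * (((p.choose i / p : ℕ) : R) * x ^ i * y ^ (p - i))
      = x ^ i * y ^ (p - i) * (p.choose i : R) := by
    intro i hi
    simp only [Finset.mem_Ioo] at hi
    have hd : p ∣ p.choose i := hp.dvd_choose_self (by omega) (by omega)
    have : (p : R) * ((p.choose i / p : ℕ) : R) = (p.choose i : R) := by
      rw [← Nat.cast_mul, Nat.mul_div_cancel' hd]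
    calc (p : R) * (((p.choose i / p : ℕ) : R) * x ^ i * y ^ (p - i))
        = ((p : R) * ((p.choose i / p : ℕ) : R)) * (x ^ i * y ^ (p - i)) := by ring
      _ = x ^ i * y ^ (p - i) * (p.choose i : R) := by rw [this]; ring
  rw [Finset.sum_congr rfl h]
  have hsplit : Finset.range (p + 1) = insert 0 (insert p (Finset.Ioo 0 p)) := by
    ext i
    simp only [Finset.mem_range, Finset.mem_insert, Finset.mem_Ioo]
    omega
  rw [hsplit, Finset.sum_insert, Finset.sum_insert]
  · simp [Nat.sub_self, hp.pos.ne']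
    ring
  · simp
  · simp only [Finset.mem_insert, Finset.mem_Ioo]
    rintro (h | h)
    · exact hp.pos.ne h
    · omega
  
lemma Bsum_cocycle_int (p : ℕ) (hp : p.Prime) (a b c : MvPolynomial (Fin 3) ℤ) :
    Bsum p a b + Bsum p (a + b) c - Bsum p b c - Bsum p a (b + c) = 0 := by
  have hpne : (p : MvPolynomial (Fin 3) ℤ) ≠ 0 := by
    exact_mod_cast Nat.cast_ne_zero.mpr hp.pos.ne'
  apply mul_left_cancel₀ hpne
  rw [mul_zero, mul_sub, mul_sub, mul_add, p_mul_Bsum p hp, p_mul_Bsum p hp,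
    p_mul_Bsum p hp, p_mul_Bsum p hp]
  ring

lemma Bsum_cocycle {R : Type*} [CommRing R] (p : ℕ) (hp : p.Prime) (a b c : R) :
    Bsum p a b + Bsum p (a + b) c - Bsum p b c - Bsum p a (b + c) = 0 := by
  have := Bsum_cocycle_int p hp (MvPolynomial.X 0) (MvPolynomial.X 1) (MvPolynomial.X 2)
  have h := congrArg (MvPolynomial.aeval (fun i : Fin 3 => ![a, b, c] i) : MvPolynomial (Fin 3) ℤ →ₐ[ℤ] R) this
  simp only [map_sub, map_add, map_zero] at h
  have hm := map_Bsum ((MvPolynomial.aeval (fun i : Fin 3 => ![a, b, c] i)).toRingHom : MvPolynomial (Fin 3) ℤ →+* R) p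
  simp only [AlgHom.toRingHom_eq_coe, RingHom.coe_coe] at hm
  rw [hm, hm, hm, hm, map_add, map_add] at h
  simpa using h

/-- The Witt 2-cocycle `β(x,y) = Σ_{i=1}^{p-1} (C(p,i)/p) x^{i p^r} y^{(p-i) p^r}`
is a symmetric 2-cocycle on the additive group of a field of characteristic `p`. -/
theorem witt_cocycle_symmetric_and_cocycle (k : Type*) [Field k] (p : ℕ) [Fact p.Prime]
    [CharP k p] (r : ℕ)
    (β : k × k → k)
    (hβ : β = fun z : k × k =>
      ∑ i ∈ Finset.Ioo 0 p, ((p.choose i / p : ℕ) : k) * z.1 ^ (i * p ^ r) * z.2 ^ ((p - i) * p ^ r)) :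
    (∀ x y : k, β (x, y) = β (y, x)) ∧ (∀ z₁ z₂ z₃ : k, delta2 β z₁ z₂ z₃ = 0) := by
  have hp : p.Prime := Fact.out
  have hB : ∀ x y : k, β (x, y) = Bsum p (x ^ p ^ r) (y ^ p ^ r) := by
    intro x y
    rw [hβ]
    unfold Bsum
    simp only
    refine Finset.sum_congr rfl fun i _ => ?_
    rw [mul_comm i (p ^ r), mul_comm (p - i) (p ^ r), pow_mul, pow_mul]
  constructor
  · intro x y
    rw [hB, hB, Bsum_symm]
  · intro z₁ z₂ z₃
    unfold delta2
    rw [hB, hB, hB, hB, add_pow_char_pow, add_pow_char_pow]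
    exact Bsum_cocycle p hp _ _ _
end

section
/- Let k be a field of characteristic p > 2, let l₂ < l₃ and m < n be nonnegative integers with l₃ − l₂ = m. Then the polynomial β(x,y) = (1/2) · x^{2p^{l₃}} · y^{p^{l₂+n}} satisfies δ²(β)(z₁,z₂,z₃) = z₁^{p^{l₃}} · z₂^{p^{l₂+m}} · z₃^{p^{l₂+n}} for all z₁, z₂, z₃ ∈ k. -/
/-- If `char k = p > 2`, `l₂ < l₃`, `m < n` and `l₃ - l₂ = m`, then
`β(x,y) = (1/2) x^{2p^{l₃}} y^{p^{l₂+n}}` satisfies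
`δ²(β)(z₁,z₂,z₃) = z₁^{p^{l₃}} z₂^{p^{l₂+m}} z₃^{p^{l₂+n}}`. -/
theorem delta2_of_half_monomial (k : Type*) [Field k] (p : ℕ) [Fact p.Prime] [CharP k p]
    (hp : 2 < p) (l₂ l₃ m n : ℕ) (hl : l₂ < l₃) (hmn : m < n) (hlm : l₃ - l₂ = m) :
    ∀ z₁ z₂ z₃ : k,
      delta2 (fun z : k × k => (1 / 2 : k) * z.1 ^ (2 * p ^ l₃) * z.2 ^ p ^ (l₂ + n)) z₁ z₂ z₃
        = z₁ ^ p ^ l₃ * z₂ ^ p ^ (l₂ + m) * z₃ ^ p ^ (l₂ + n) := by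
  have hl3 : l₃ = l₂ + m := by omega
  subst hl3
  have h2 : (2:k) ≠ 0 := by
    intro h
    have hd := (CharP.cast_eq_zero_iff k p 2).mp (by exact_mod_cast h)
    exact absurd (Nat.le_of_dvd (by norm_num) hd) (by omega)
  intro z₁ z₂ z₃
  simp only [delta2]
  rw [show 2 * p ^ (l₂ + m) = p ^ (l₂ + m) * 2 from mul_comm _ _]
  simp only [pow_mul, add_pow_char_pow]
  field_simp
  ring
end

section
/- Let k be a field of characteristic p > 2, let l₂, l₃ and m < n be nonnegative integers with l₃ − l₂ = n. Then the polynomial β(x,y) = x^{p^{l₃} + p^{l₂+m}} · y^{p^{l₃}} + (1/2) · x^{p^{l₂+m}} · y^{2p^{l₃}} satisfies δ²(β)(z₁,z₂,z₃) = z₁^{p^{l₃}} · z₂^{p^{l₂+m}} · z₃^{p^{l₂+n}} for all z₁, z₂, z₃ ∈ k. -/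
/-- If `char k = p > 2`, `m < n` and `l₃ - l₂ = n`, then
`β(x,y) = x^{p^{l₃}+p^{l₂+m}} y^{p^{l₃}} + (1/2) x^{p^{l₂+m}} y^{2p^{l₃}}` satisfies
`δ²(β)(z₁,z₂,z₃) = z₁^{p^{l₃}} z₂^{p^{l₂+m}} z₃^{p^{l₂+n}}`. -/
theorem delta2_of_mixed_monomial (k : Type*) [Field k] (p : ℕ) [Fact p.Prime] [CharP k p]
    (hp : 2 < p) (l₂ l₃ m n : ℕ) (hmn : m < n) (hln : l₃ - l₂ = n) :
    ∀ z₁ z₂ z₃ : k,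
      delta2 (fun z : k × k =>
          z.1 ^ (p ^ l₃ + p ^ (l₂ + m)) * z.2 ^ p ^ l₃
            + (1 / 2 : k) * z.1 ^ p ^ (l₂ + m) * z.2 ^ (2 * p ^ l₃)) z₁ z₂ z₃
        = z₁ ^ p ^ l₃ * z₂ ^ p ^ (l₂ + m) * z₃ ^ p ^ (l₂ + n) := by
  intro z₁ z₂ z₃
  have hl : l₂ + n = l₃ := by omega
  have h2 : (2 : k) ≠ 0 := by
    intro h
    have hd := (CharP.cast_eq_zero_iff k p 2).mp (by exact_mod_cast h)
    have := Nat.le_of_dvd (by norm_num) hd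
    omega
  have fq : ∀ a b : k, (a + b) ^ p ^ l₃ = a ^ p ^ l₃ + b ^ p ^ l₃ :=
    fun a b => add_pow_char_pow a b _ _
  have fr : ∀ a b : k, (a + b) ^ p ^ (l₂ + m) = a ^ p ^ (l₂ + m) + b ^ p ^ (l₂ + m) :=
    fun a b => add_pow_char_pow a b _ _
  simp only [delta2, hl, fq, fr, pow_add (p ^ l₃), two_mul, pow_add _ (p ^ l₃)]
  field_simp
  ring
end

section
/- Let k be a field of characteristic 2 and let m < n be nonnegative integers. There is no polynomial γ ∈ k[x,y] with γ(0,y) = γ(x,0) = 0 satisfying δ²(γ)(z₁,z₂,z₃) = z₁ · z₂ · z₃^{2^{n−m}} as polynomials in k[z₁,z₂,z₃], and there is no polynomial γ with γ(0,y)=γ(x,0)=0 satisfying δ²(γ)(z₁,z₂,z₃) = z₁^{2^{n−m}} · z₂ · z₃^{2^{n−m}}. -/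
open MvPolynomial

/-- The second coboundary operator at the level of polynomials: for
`γ ∈ k[x,y]`, `δ²(γ) = γ(z₁,z₂) + γ(z₁+z₂,z₃) - γ(z₂,z₃) - γ(z₁,z₂+z₃)`
as a polynomial in `k[z₁,z₂,z₃]`. -/
noncomputable def polyDelta2 {k : Type*} [CommRing k] (γ : MvPolynomial (Fin 2) k) :
    MvPolynomial (Fin 3) k :=
  aeval ![X 0, X 1] γ + aeval ![X 0 + X 1, X 2] γ
    - aeval ![X 1, X 2] γ - aeval ![X 0, X 1 + X 2] γ


lemma phi_delta_zero {k : Type*} [Field k] [CharP k 2] (γ : MvPolynomial (Fin 2) k)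
    (h1 : aeval ![(0 : MvPolynomial (Fin 2) k), X 1] γ = 0)
    (h2 : aeval ![X 0, (0 : MvPolynomial (Fin 2) k)] γ = 0) :
    aeval (fun _ : Fin 3 => (Polynomial.X : Polynomial k)) (polyDelta2 γ) = 0 := by
  set φ : MvPolynomial (Fin 3) k →ₐ[k] Polynomial k :=
    aeval (fun _ : Fin 3 => (Polynomial.X : Polynomial k)) with hφ
  set ψ : MvPolynomial (Fin 2) k →ₐ[k] Polynomial k :=
    aeval (fun _ : Fin 2 => (Polynomial.X : Polynomial k)) with hψ
  have hXX : (Polynomial.X : Polynomial k) + Polynomial.X = 0 :=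
    CharTwo.add_self_eq_zero _
  have keyφ : ∀ (f : Fin 2 → MvPolynomial (Fin 3) k),
      φ (aeval f γ) = aeval (fun i => φ (f i)) γ := fun f => by
    rw [hφ, ← AlgHom.comp_apply, comp_aeval]
  have keyψ : ∀ (f : Fin 2 → MvPolynomial (Fin 2) k),
      ψ (aeval f γ) = aeval (fun i => ψ (f i)) γ := fun f => by
    rw [hψ, ← AlgHom.comp_apply, comp_aeval]
  have e1 : φ (aeval ![X 0, X 1] γ) = ψ γ := by
    rw [keyφ]
    have hfun : (fun i => φ (![X 0, X 1] i)) = (fun _ : Fin 2 => (Polynomial.X : Polynomial k)) := by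
      funext i; fin_cases i <;> simp [hφ]
    rw [hfun, hψ]
  have e3 : φ (aeval ![X 1, X 2] γ) = ψ γ := by
    rw [keyφ]
    have hfun : (fun i => φ (![X 1, X 2] i)) = (fun _ : Fin 2 => (Polynomial.X : Polynomial k)) := by
      funext i; fin_cases i <;> simp [hφ]
    rw [hfun, hψ]
  have e2 : φ (aeval ![X 0 + X 1, X 2] γ) = 0 := by
    have h := congrArg ψ h1
    rw [keyψ, map_zero] at h
    rw [keyφ, ← h]
    have hfun : (fun i => φ (![X 0 + X 1, X 2] i)) =
        (fun i => ψ (![(0 : MvPolynomial (Fin 2) k), X 1] i)) := by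
      funext i; fin_cases i <;> simp [hφ, hψ, hXX]
    rw [hfun]
  have e4 : φ (aeval ![X 0, X 1 + X 2] γ) = 0 := by
    have h := congrArg ψ h2
    rw [keyψ, map_zero] at h
    rw [keyφ, ← h]
    have hfun : (fun i => φ (![X 0, X 1 + X 2] i)) =
        (fun i => ψ (![X 0, (0 : MvPolynomial (Fin 2) k)] i)) := by
      funext i; fin_cases i <;> simp [hφ, hψ, hXX]
    rw [hfun]
  show φ (polyDelta2 γ) = 0
  rw [polyDelta2, map_sub, map_sub, map_add, e1, e2, e3, e4]
  ring

/-- In characteristic 2, with `m < n`, there is no polynomial `γ ∈ k[x,y]`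
vanishing on the axes with `δ²(γ) = z₁ z₂ z₃^{2^{n-m}}`, and none with
`δ²(γ) = z₁^{2^{n-m}} z₂ z₃^{2^{n-m}}`. -/
theorem no_gamma_char_two (k : Type*) [Field k] [CharP k 2] (m n : ℕ) (hmn : m < n) :
    (¬ ∃ γ : MvPolynomial (Fin 2) k,
        aeval ![(0 : MvPolynomial (Fin 2) k), X 1] γ = 0 ∧
        aeval ![X 0, (0 : MvPolynomial (Fin 2) k)] γ = 0 ∧
        polyDelta2 γ = X 0 * X 1 * X 2 ^ 2 ^ (n - m)) ∧
    (¬ ∃ γ : MvPolynomial (Fin 2) k,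
        aeval ![(0 : MvPolynomial (Fin 2) k), X 1] γ = 0 ∧
        aeval ![X 0, (0 : MvPolynomial (Fin 2) k)] γ = 0 ∧
        polyDelta2 γ = X 0 ^ 2 ^ (n - m) * X 1 * X 2 ^ 2 ^ (n - m)) := by
  constructor <;> rintro ⟨γ, h1, h2, h3⟩ <;>
    · have h0 := phi_delta_zero γ h1 h2
      rw [h3] at h0
      simp [Polynomial.X_ne_zero, pow_ne_zero] at h0
end

section
/- Let k be a field and let β : k × k → k be a function satisfying the cocycle condition δ²(β) = 0 and β(x,0) = β(0,y) = 0 for all x,y. Let h₂, h₃ be positive integers such that t ↦ t^{h₂} and t ↦ t^{h₃} are additive endomorphisms of (k,+) (e.g. h₂ = h₃ = 1, or powers of p when char k = p). Then the product on k³ defined by (x₁,x₂,x₃)·(y₁,y₂,y₃) = (x₁ + y₁ + y₂^{h₂}·x₃^{h₃} + β(x₃,y₃), x₂ + y₂, x₃ + y₃) makes k³ into a group with identity (0,0,0). -/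
/-- The product `(x₁,x₂,x₃)·(y₁,y₂,y₃) =
`(x₁+y₁+y₂^{h₂}x₃^{h₃}+β(x₃,y₃), x₂+y₂, x₃+y₃)` makes `k³` into a group with
identity `(0,0,0)`, provided `β` is a normalized 2-cocycle and
`t ↦ t^{h₂}`, `t ↦ t^{h₃}` are additive. -/
theorem product_is_group (k : Type*) [Field k] (β : k × k → k)
    (hcoc : ∀ z₁ z₂ z₃ : k, delta2 β z₁ z₂ z₃ = 0)
    (hnorm₁ : ∀ x : k, β (x, 0) = 0) (hnorm₂ : ∀ y : k, β (0, y) = 0)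
    (h₂ h₃ : ℕ) (hh₂ : 0 < h₂) (hh₃ : 0 < h₃)
    (hadd₂ : ∀ x y : k, (x + y) ^ h₂ = x ^ h₂ + y ^ h₂)
    (hadd₃ : ∀ x y : k, (x + y) ^ h₃ = x ^ h₃ + y ^ h₃)
    (mul : k × k × k → k × k × k → k × k × k)
    (hmul : ∀ x y : k × k × k, mul x y =
      (x.1 + y.1 + y.2.1 ^ h₂ * x.2.2 ^ h₃ + β (x.2.2, y.2.2),
        x.2.1 + y.2.1, x.2.2 + y.2.2)) :
    (∀ x y z : k × k × k, mul (mul x y) z = mul x (mul y z)) ∧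
    (∀ x : k × k × k, mul x (0, 0, 0) = x ∧ mul (0, 0, 0) x = x) ∧
    (∀ x : k × k × k, ∃ y : k × k × k, mul x y = (0, 0, 0) ∧ mul y x = (0, 0, 0)) := by
  have hneg₂ : ∀ x : k, (-x) ^ h₂ = -(x ^ h₂) := by
    intro x
    have h := hadd₂ x (-x)
    rw [add_neg_cancel, zero_pow hh₂.ne'] at h
    linear_combination -h
  have hneg₃ : ∀ x : k, (-x) ^ h₃ = -(x ^ h₃) := by
    intro x
    have h := hadd₃ x (-x)
    rw [add_neg_cancel, zero_pow hh₃.ne'] at h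
    linear_combination -h
  have hsym : ∀ x : k, β (-x, x) = β (x, -x) := by
    intro x
    have h := hcoc x (-x) x
    unfold delta2 at h
    rw [add_neg_cancel, neg_add_cancel, hnorm₁, hnorm₂] at h
    linear_combination -h
  refine ⟨?_, ?_, ?_⟩
  · intro x y z
    simp only [hmul]
    have hc := hcoc x.2.2 y.2.2 z.2.2
    unfold delta2 at hc
    refine Prod.ext ?_ (Prod.ext ?_ ?_) <;>
      simp only [hadd₂, hadd₃] <;> first
      | linear_combination hc
      | ring
  · intro x
    constructor <;> simp [hmul, hnorm₁, hnorm₂, zero_pow hh₂.ne', zero_pow hh₃.ne']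
  · intro x
    refine ⟨(-x.1 + x.2.1 ^ h₂ * x.2.2 ^ h₃ - β (x.2.2, -x.2.2), -x.2.1, -x.2.2), ?_, ?_⟩ <;>
      simp only [hmul, hneg₂, hneg₃, hsym] <;>
      refine Prod.ext ?_ (Prod.ext ?_ ?_) <;> simp <;> ring
end

section
/- Let k be a field of characteristic p > 2, let m < n be nonnegative integers, let h₂ = p^{l₂}, h₃ = p^{l₃} with l₃ − l₂ = m, and let β(x,y) = (1/2)x^{2p^{l₃}}y^{p^{l₂+n}}. Then the product on k³ defined by (x₁,x₂,x₃)·(y₁,y₂,y₃) = (x₁ + y₁ + y₂^{h₂}x₃^{h₃} + β(x₃,y₃), x₂ + y₂ + x₃^{p^m}y₃^{p^n}, x₃ + y₃) is associative, hence defines a group structure on k³. -/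
/-- For `char k = p > 2`, `m < n`, `h₂ = p^{l₂}`, `h₃ = p^{l₃}` with `l₃ - l₂ = m`
and `β(x,y) = (1/2) x^{2p^{l₃}} y^{p^{l₂+n}}`, the product
`(x₁,x₂,x₃)·(y₁,y₂,y₃) = (x₁+y₁+y₂^{h₂}x₃^{h₃}+β(x₃,y₃),
x₂+y₂+x₃^{p^m}y₃^{p^n}, x₃+y₃)` is associative, hence a group structure on `k³`. -/
theorem noncommutative_product_is_group (k : Type*) [Field k] (p : ℕ) [Fact p.Prime]
    [CharP k p] (hp : 2 < p) (m n l₂ l₃ : ℕ) (hmn : m < n) (hl : l₃ - l₂ = m) (hll : l₂ ≤ l₃)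
    (β : k × k → k)
    (hβ : β = fun z : k × k => (1 / 2 : k) * z.1 ^ (2 * p ^ l₃) * z.2 ^ p ^ (l₂ + n))
    (mul : k × k × k → k × k × k → k × k × k)
    (hmul : ∀ x y : k × k × k, mul x y =
      (x.1 + y.1 + y.2.1 ^ p ^ l₂ * x.2.2 ^ p ^ l₃ + β (x.2.2, y.2.2),
        x.2.1 + y.2.1 + x.2.2 ^ p ^ m * y.2.2 ^ p ^ n, x.2.2 + y.2.2)) :
    (∀ x y z : k × k × k, mul (mul x y) z = mul x (mul y z)) ∧
    (∀ x : k × k × k, mul x (0, 0, 0) = x ∧ mul (0, 0, 0) x = x) ∧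
    (∀ x : k × k × k, ∃ y : k × k × k, mul x y = (0, 0, 0) ∧ mul y x = (0, 0, 0)) := by
  have hpp : p.Prime := Fact.out
  have hfrob : ∀ (a b : k) (j : ℕ), (a + b) ^ p ^ j = a ^ p ^ j + b ^ p ^ j := by
    intro a b j
    exact add_pow_char_pow a b p j
  have hl3 : l₃ = m + l₂ := by omega
  have key1 : ∀ a : k, (a ^ p ^ m) ^ p ^ l₂ = a ^ p ^ l₃ := by
    intro a
    rw [← pow_mul, ← pow_add, hl3]
  have key2 : ∀ a : k, (a ^ p ^ n) ^ p ^ l₂ = a ^ p ^ (l₂ + n) := by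
    intro a
    rw [← pow_mul, ← pow_add, Nat.add_comm]
  have hne : ∀ j : ℕ, p ^ j ≠ 0 := fun j => pow_ne_zero j hpp.ne_zero
  have h2 : (2 : k) ≠ 0 := by
    intro h
    have h' := (CharP.cast_eq_zero_iff k p 2).mp (by exact_mod_cast h)
    have := Nat.le_of_dvd (by norm_num) h'
    omega
  have hsq : ∀ a b : k, (a + b) ^ (2 * p ^ l₃)
      = a ^ (2 * p ^ l₃) + 2 * a ^ p ^ l₃ * b ^ p ^ l₃ + b ^ (2 * p ^ l₃) := by
    intro a b
    rw [mul_comm 2 (p ^ l₃), pow_mul, pow_mul, pow_mul, hfrob]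
    ring
  have hassoc : ∀ x y z : k × k × k, mul (mul x y) z = mul x (mul y z) := by
    intro x y z
    obtain ⟨x₁, x₂, x₃⟩ := x
    obtain ⟨y₁, y₂, y₃⟩ := y
    obtain ⟨z₁, z₂, z₃⟩ := z
    simp only [hmul, hβ, Prod.mk.injEq]
    refine ⟨?_, ?_, by ring⟩
    · simp only [hsq, hfrob, mul_pow, key1, key2]
      field_simp
      ring
    · simp only [hfrob, mul_pow]
      ring
  have hid : ∀ x : k × k × k, mul x (0, 0, 0) = x ∧ mul (0, 0, 0) x = x := by
    intro x
    obtain ⟨x₁, x₂, x₃⟩ := x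
    constructor <;>
    · simp only [hmul, hβ]
      simp [zero_pow (hne _), zero_pow (by positivity : 2 * p ^ l₃ ≠ 0)]
  have hrinv : ∀ x : k × k × k, ∃ y : k × k × k, mul x y = (0, 0, 0) := by
    intro x
    obtain ⟨x₁, x₂, x₃⟩ := x
    refine ⟨(-x₁ - (-x₂ - x₃ ^ p ^ m * (-x₃) ^ p ^ n) ^ p ^ l₂ * x₃ ^ p ^ l₃ - β (x₃, -x₃),
      -x₂ - x₃ ^ p ^ m * (-x₃) ^ p ^ n, -x₃), ?_⟩
    simp only [hmul, Prod.mk.injEq]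
    exact ⟨by ring, by ring, by ring⟩
  refine ⟨hassoc, hid, ?_⟩
  intro x
  obtain ⟨y, hxy⟩ := hrinv x
  obtain ⟨z, hyz⟩ := hrinv y
  have hyx : mul y x = (0, 0, 0) := by
    calc mul y x = mul (mul y x) (0, 0, 0) := ((hid (mul y x)).1).symm
      _ = mul (mul y x) (mul y z) := by rw [hyz]
      _ = mul (mul (mul y x) y) z := (hassoc (mul y x) y z).symm
      _ = mul (mul y (mul x y)) z := by rw [hassoc y x y]
      _ = mul y z := by rw [hxy, (hid y).1]
      _ = (0, 0, 0) := hyz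
  exact ⟨y, hxy, hyx⟩
end

section
/- Let k be a field and consider the group G on k³ with product (x₁,x₂,x₃)·(y₁,y₂,y₃) = (x₁ + y₁ + y₂^{h₂}x₃^{h₃} + β(x₃,y₃), x₂ + y₂, x₃ + y₃), where β satisfies δ²(β)=0, β(x,0)=β(0,y)=0, and t ↦ t^{h₂}, t ↦ t^{h₃} are additive. Then L = {(x₁,0,x₃) : x₁,x₃ ∈ k} is a normal subgroup of G, and G is the semidirect product L ⋊ H where H = {(0,x₂,0) : x₂ ∈ k}. -/
/-- In the group `G` on `k³` with product
`(x₁,x₂,x₃)·(y₁,y₂,y₃) = (x₁+y₁+y₂^{h₂}x₃^{h₃}+β(x₃,y₃), x₂+y₂, x₃+y₃)`,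
the set `L = {(x₁,0,x₃)}` is a normal subgroup and `G = L ⋊ H` with
`H = {(0,x₂,0)}`:  `L` is closed under the product and normal, `L ∩ H` is
trivial and `L·H = G`. -/
theorem transversal_is_normal_complement (k : Type*) [Field k] (β : k × k → k)
    (hcoc : ∀ z₁ z₂ z₃ : k, delta2 β z₁ z₂ z₃ = 0)
    (hnorm₁ : ∀ x : k, β (x, 0) = 0) (hnorm₂ : ∀ y : k, β (0, y) = 0)
    (h₂ h₃ : ℕ) (hh₂ : 0 < h₂) (hh₃ : 0 < h₃)
    (hadd₂ : ∀ x y : k, (x + y) ^ h₂ = x ^ h₂ + y ^ h₂)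
    (hadd₃ : ∀ x y : k, (x + y) ^ h₃ = x ^ h₃ + y ^ h₃)
    (mul : k × k × k → k × k × k → k × k × k)
    (hmul : ∀ x y : k × k × k, mul x y =
      (x.1 + y.1 + y.2.1 ^ h₂ * x.2.2 ^ h₃ + β (x.2.2, y.2.2),
        x.2.1 + y.2.1, x.2.2 + y.2.2))
    (L H : Set (k × k × k))
    (hL : L = {x : k × k × k | x.2.1 = 0})
    (hH : H = {x : k × k × k | x.1 = 0 ∧ x.2.2 = 0}) :
    -- L is a subgroup:
    ((0, 0, 0) ∈ L ∧ (∀ x ∈ L, ∀ y ∈ L, mul x y ∈ L) ∧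
      (∀ x ∈ L, ∃ y ∈ L, mul x y = (0, 0, 0) ∧ mul y x = (0, 0, 0))) ∧
    -- L is normal in G:
    (∀ g : k × k × k, ∀ l ∈ L, ∃ l' ∈ L, mul g l = mul l' g) ∧
    -- H is a subgroup:
    ((0, 0, 0) ∈ H ∧ (∀ x ∈ H, ∀ y ∈ H, mul x y ∈ H) ∧
      (∀ x ∈ H, ∃ y ∈ H, mul x y = (0, 0, 0) ∧ mul y x = (0, 0, 0))) ∧
    -- L ∩ H is trivial and L·H = G:
    (L ∩ H = {(0, 0, 0)}) ∧
    (∀ g : k × k × k, ∃ l ∈ L, ∃ h ∈ H, g = mul l h) := by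
  subst hL hH
  have hz2 : (0:k) ^ h₂ = 0 := zero_pow hh₂.ne'
  have hz3 : (0:k) ^ h₃ = 0 := zero_pow hh₃.ne'
  have hβ0 : β (0, 0) = 0 := hnorm₁ 0
  have hβ0' : β 0 = 0 := hnorm₁ 0
  have hskew : ∀ z : k, β (z, -z) = β (-z, z) := by
    intro z
    have := hcoc z (-z) z
    simp [delta2, hnorm₁, hnorm₂] at this
    linear_combination this
  refine ⟨⟨rfl, ?_, ?_⟩, ?_, ⟨⟨rfl, rfl⟩, ?_, ?_⟩, ?_, ?_⟩
  · intro x hx y hy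
    simp only [Set.mem_setOf_eq] at hx hy ⊢
    simp [hmul, hx, hy]
  · intro x hx
    simp only [Set.mem_setOf_eq] at hx
    refine ⟨(-x.1 - β (x.2.2, -x.2.2), 0, -x.2.2), rfl, ?_, ?_⟩
    · simp [hmul, hx, hz2, Prod.ext_iff]; ring
    · simp [hmul, hx, hz2, Prod.ext_iff, ← hskew x.2.2]; ring
  · intro g l hl
    simp only [Set.mem_setOf_eq] at hl
    refine ⟨(l.1 + β (g.2.2, l.2.2) - g.2.1 ^ h₂ * l.2.2 ^ h₃ - β (l.2.2, g.2.2), 0, l.2.2),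
      rfl, ?_⟩
    simp [hmul, hl, hz2, Prod.ext_iff]
    constructor
    · ring
    · exact add_comm _ _
  · intro x hx y hy
    obtain ⟨hx1, hx3⟩ := hx
    obtain ⟨hy1, hy3⟩ := hy
    simp [hmul, hx1, hx3, hy1, hy3, hz3, hβ0, hβ0', Set.mem_setOf_eq]
  · intro x hx
    obtain ⟨hx1, hx3⟩ := hx
    refine ⟨(0, -x.2.1, 0), ⟨rfl, rfl⟩, ?_, ?_⟩ <;>
      simp [hmul, hx1, hx3, hz3, hβ0, hβ0', Prod.ext_iff]
  · ext x
    simp only [Set.mem_inter_iff, Set.mem_setOf_eq, Set.mem_singleton_iff, Prod.ext_iff]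
    tauto
  · intro g
    refine ⟨(g.1 - g.2.1 ^ h₂ * g.2.2 ^ h₃, 0, g.2.2), rfl, (0, g.2.1, 0), ⟨rfl, rfl⟩, ?_⟩
    simp [hmul, hnorm₁, Prod.ext_iff]
end

section
/- Let k be a field and let G be the group on k³ with product (x₁,x₂,x₃)·(y₁,y₂,y₃) = (x₁ + y₁ + y₂^{h₂}x₃^{h₃} + β(x₃,y₃), x₂ + y₂, x₃ + y₃) as above. Then conjugation by the element υ = (0,0,u) maps (y₁,y₂,0) to (y₁ + y₂^{h₂}·u^{h₃}, y₂, 0). In particular, if u ≠ 0 and t ↦ t^{h₂}, t ↦ t^{h₃} are injective, then υ centralizes no nontrivial element of the subgroup {(0,y₂,0) : y₂ ∈ k}. -/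
/-- Conjugation by `υ = (0,0,u)` in the group on `k³` maps `(y₁,y₂,0)` to
`(y₁ + y₂^{h₂} u^{h₃}, y₂, 0)` (equivalently `υ·y = (result)·υ`), and if
`u ≠ 0` and `t ↦ t^{h₂}`, `t ↦ t^{h₃}` are injective, `υ` centralizes no
nontrivial element of `{(0,y₂,0)}`. -/
theorem conjugation_by_translation (k : Type*) [Field k] (β : k × k → k)
    (hcoc : ∀ z₁ z₂ z₃ : k, delta2 β z₁ z₂ z₃ = 0)
    (hnorm₁ : ∀ x : k, β (x, 0) = 0) (hnorm₂ : ∀ y : k, β (0, y) = 0)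
    (h₂ h₃ : ℕ) (hh₂ : 0 < h₂) (hh₃ : 0 < h₃)
    (hadd₂ : ∀ x y : k, (x + y) ^ h₂ = x ^ h₂ + y ^ h₂)
    (hadd₃ : ∀ x y : k, (x + y) ^ h₃ = x ^ h₃ + y ^ h₃)
    (mul : k × k × k → k × k × k → k × k × k)
    (hmul : ∀ x y : k × k × k, mul x y =
      (x.1 + y.1 + y.2.1 ^ h₂ * x.2.2 ^ h₃ + β (x.2.2, y.2.2),
        x.2.1 + y.2.1, x.2.2 + y.2.2))
    (u : k) :
    (∀ y₁ y₂ : k,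
      mul (0, 0, u) (y₁, y₂, 0) = mul (y₁ + y₂ ^ h₂ * u ^ h₃, y₂, 0) (0, 0, u)) ∧
    (u ≠ 0 → Function.Injective (fun t : k => t ^ h₂) →
      Function.Injective (fun t : k => t ^ h₃) →
      ∀ y₂ : k, mul (0, 0, u) (0, y₂, 0) = mul (0, y₂, 0) (0, 0, u) → y₂ = 0) := by
  have key : ∀ y₁ y₂ : k,
      mul (0, 0, u) (y₁, y₂, 0) = mul (y₁ + y₂ ^ h₂ * u ^ h₃, y₂, 0) (0, 0, u) := by
    intro y₁ y₂
    rw [hmul, hmul]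
    simp [hnorm₁, hnorm₂, zero_pow hh₂.ne', add_comm]
  refine ⟨key, fun hu hi₂ hi₃ y₂ hc => ?_⟩
  have := (key 0 y₂).symm.trans hc
  rw [hmul, hmul] at this
  have h1 : y₂ ^ h₂ * u ^ h₃ = 0 := by
    have := congrArg Prod.fst this
    simpa using this.symm
  have hu3 : u ^ h₃ ≠ 0 := pow_ne_zero _ hu
  have : y₂ ^ h₂ = 0 := by
    rcases mul_eq_zero.mp h1 with h | h
    · exact h
    · exact absurd h hu3
  have := hi₂ (a₁ := y₂) (a₂ := 0) (by simpa [zero_pow hh₂.ne'] using this)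
  exact this
end

section
/- Let k be a field of characteristic p > 0 and r a nonnegative integer. In the group W on k² with product (x₁,x₂)·(y₁,y₂) = (x₁ + y₁ + Σ_{i=1}^{p-1} (1/p)C(p,i) x₂^{i p^r} y₂^{(p−i)p^r}, x₂ + y₂), every element (x₁, x₂) with x₂ ≠ 0 has order p², and every element of the form (x₁, 0) with x₁ ≠ 0 has order p. In particular W is an abelian group of exponent p². -/
open Finset in
private lemma wg_cast_pow {k : Type*} [Field k] (p : ℕ) [Fact p.Prime] [CharP k p] (r j : ℕ) :
    (j : k) ^ p ^ r = (j : k) := by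
  induction r with
  | zero => simp
  | succ r ih =>
    rw [pow_succ, pow_mul, ih, ← frobenius_def, map_natCast]

open Finset in
private lemma wg_onestep (p : ℕ) (hp : 0 < p) (j : ℕ) :
    (∑ i ∈ Ioo 0 p, p.choose i * j ^ i) + 1 + j ^ p = (j + 1) ^ p := by
  have h := add_pow j 1 p
  simp only [one_pow, mul_one] at h
  rw [h, Finset.sum_range_succ]
  have hsplit : Finset.range p = insert 0 (Finset.Ioo 0 p) := by
    ext i; simp; omega
  rw [hsplit, Finset.sum_insert (by simp)]
  simp [Nat.choose_self, mul_comm]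
  ring

open Finset in
private lemma wg_telescope (p : ℕ) (hp : 0 < p) :
    (∑ j ∈ range p, ∑ i ∈ Ioo 0 p, p.choose i * j ^ i) + p = p ^ p := by
  have h1 : ∑ j ∈ range p, (j + 1) ^ p = ∑ j ∈ range p, j ^ p + p ^ p := by
    have := Finset.sum_range_succ' (fun j => j ^ p) p
    have h0 : (0:ℕ) ^ p = 0 := by simp [Nat.pos_iff_ne_zero.mp hp]
    have h2 := Finset.sum_range_succ (fun j => j ^ p) p
    omega
  have h2 : ∑ j ∈ range p, (j + 1) ^ p
      = ∑ j ∈ range p, ((∑ i ∈ Ioo 0 p, p.choose i * j ^ i) + 1 + j ^ p) := by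
    refine Finset.sum_congr rfl fun j _ => (wg_onestep p hp j).symm
  rw [h2] at h1
  simp only [Finset.sum_add_distrib, Finset.sum_const, card_range, smul_eq_mul, mul_one] at h1
  omega

open Finset in
private lemma wg_reindex (p : ℕ) (j : ℕ) :
    ∑ i ∈ Ioo 0 p, p.choose i / p * j ^ (p - i) = ∑ i ∈ Ioo 0 p, p.choose i / p * j ^ i := by
  refine Finset.sum_nbij' (fun i => p - i) (fun i => p - i) ?_ ?_ ?_ ?_ ?_
  · intro i hi; simp at hi ⊢; omega
  · intro i hi; simp at hi ⊢; omega
  · intro i hi; simp at hi ⊢; omega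
  · intro i hi; simp at hi ⊢; omega
  · intro i hi
    simp at hi
    rw [Nat.choose_symm (by omega)]

open Finset in
private lemma wg_nat_sum (p : ℕ) (hp : p.Prime) :
    (∑ j ∈ range p, ∑ i ∈ Ioo 0 p, p.choose i / p * j ^ (p - i)) + 1 = p ^ (p - 1) := by
  have hp0 : 0 < p := hp.pos
  have hmul : p * ((∑ j ∈ range p, ∑ i ∈ Ioo 0 p, p.choose i / p * j ^ (p - i)) + 1)
      = p * p ^ (p - 1) := by
    have hdvd : ∀ i ∈ Ioo 0 p, p * (p.choose i / p) = p.choose i := by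
      intro i hi; simp at hi
      exact Nat.mul_div_cancel' (hp.dvd_choose_self (by omega) hi.2)
    have h1 : p * (∑ j ∈ range p, ∑ i ∈ Ioo 0 p, p.choose i / p * j ^ (p - i))
        = ∑ j ∈ range p, ∑ i ∈ Ioo 0 p, p.choose i * j ^ i := by
      rw [Finset.mul_sum]
      refine Finset.sum_congr rfl fun j _ => ?_
      rw [Finset.mul_sum, show (∑ i ∈ Ioo 0 p, p * (p.choose i / p * j ^ (p - i)))
          = ∑ i ∈ Ioo 0 p, p.choose i / p * j ^ (p - i) * p from by
        refine Finset.sum_congr rfl fun i hi => by ring, ← Finset.sum_mul, wg_reindex,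
        Finset.sum_mul]
      refine Finset.sum_congr rfl fun i hi => ?_
      rw [mul_comm, ← mul_assoc, hdvd i hi]
    have h2 := wg_telescope p hp0
    have h3 : p * p ^ (p - 1) = p ^ p := by
      cases p with
      | zero => omega
      | succ q => simp [pow_succ, mul_comm]
    rw [Nat.mul_add, h1, mul_one, h3]
    omega
  exact Nat.eq_of_mul_eq_mul_left hp0 hmul

open Finset in
private lemma wg_psi_sum_range_p (k : Type*) [Field k] (p : ℕ) [Fact p.Prime] [CharP k p] :
    ∑ j ∈ range p, ∑ i ∈ Ioo 0 p, ((p.choose i / p : ℕ) : k) * (j : k) ^ (p - i) = -1 := by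
  have hp := Fact.out (p := p.Prime)
  have h1 : ∑ j ∈ range p, ∑ i ∈ Ioo 0 p, ((p.choose i / p : ℕ) : k) * (j : k) ^ (p - i)
      = ((∑ j ∈ range p, ∑ i ∈ Ioo 0 p, p.choose i / p * j ^ (p - i) : ℕ) : k) := by
    push_cast; ring
  rw [h1]
  have h2 := wg_nat_sum p hp
  have h3 : ((p : k)) ^ (p - 1) = 0 := by
    rw [CharP.cast_eq_zero k p]
    exact zero_pow (by have := hp.two_le; omega)
  have h5 : ((∑ j ∈ range p, ∑ i ∈ Ioo 0 p, p.choose i / p * j ^ (p - i) : ℕ) : k) + 1 = 0 := by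
    calc ((∑ j ∈ range p, ∑ i ∈ Ioo 0 p, p.choose i / p * j ^ (p - i) : ℕ) : k) + 1
        = (((∑ j ∈ range p, ∑ i ∈ Ioo 0 p, p.choose i / p * j ^ (p - i)) + 1 : ℕ) : k) := by
          push_cast; ring
      _ = ((p ^ (p - 1) : ℕ) : k) := by rw [h2]
      _ = 0 := by push_cast [h3]; rfl
  linear_combination h5

open Finset in
private lemma wg_psi_sum_mul (k : Type*) [Field k] (p : ℕ) [Fact p.Prime] [CharP k p] (m : ℕ) :
    ∑ j ∈ range (p * m), ∑ i ∈ Ioo 0 p, ((p.choose i / p : ℕ) : k) * (j : k) ^ (p - i)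
      = -(m : k) := by
  induction m with
  | zero => simp
  | succ m ih =>
    have : p * (m + 1) = p * m + p := by ring
    rw [this, Finset.sum_range_add, ih]
    have h2 : ∀ j : ℕ, ((p * m + j : ℕ) : k) = (j : k) := by
      intro j; push_cast; simp [CharP.cast_eq_zero]
    have h3 : ∑ j ∈ range p,
        ∑ i ∈ Ioo 0 p, ((p.choose i / p : ℕ) : k) * ((p * m + j : ℕ) : k) ^ (p - i) = -1 := by
      rw [← wg_psi_sum_range_p k p]
      exact Finset.sum_congr rfl fun j _ => Finset.sum_congr rfl fun i _ => by rw [h2]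
    rw [h3]; push_cast; ring

/-- Iterated product (`n`-th power) with respect to a binary operation `mul`
with identity candidate `e`. -/
def gpow {α : Type*} (mul : α → α → α) (e : α) (x : α) : ℕ → α
  | 0 => e
  | n + 1 => mul x (gpow mul e x n)

/-- In the Witt group `W` on `k²` (characteristic `p > 0`), every element
`(x₁,x₂)` with `x₂ ≠ 0` has order `p²`, every `(x₁,0)` with `x₁ ≠ 0` has
order `p`, and `W` is abelian of exponent `p²`. -/
theorem witt_group_orders (k : Type*) [Field k] (p : ℕ) [Fact p.Prime] [CharP k p]
    (r : ℕ)
    (mul : k × k → k × k → k × k)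
    (hmul : ∀ x y : k × k, mul x y =
      (x.1 + y.1 + ∑ i ∈ Finset.Ioo 0 p,
          ((p.choose i / p : ℕ) : k) * x.2 ^ (i * p ^ r) * y.2 ^ ((p - i) * p ^ r),
        x.2 + y.2)) :
    (∀ x : k × k, x.2 ≠ 0 →
      gpow mul (0, 0) x (p ^ 2) = (0, 0) ∧
      ∀ j : ℕ, 0 < j → j < p ^ 2 → gpow mul (0, 0) x j ≠ (0, 0)) ∧
    (∀ x₁ : k, x₁ ≠ 0 →
      gpow mul (0, 0) (x₁, 0) p = (0, 0) ∧
      ∀ j : ℕ, 0 < j → j < p → gpow mul (0, 0) (x₁, (0 : k)) j ≠ (0, 0)) ∧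
    (∀ x y : k × k, mul x y = mul y x) ∧
    (∀ x : k × k, gpow mul (0, 0) x (p ^ 2) = (0, 0)) := by
  have hp := Fact.out (p := p.Prime)
  have hp0 : 0 < p := hp.pos
  -- the master formula for powers
  have key : ∀ (x : k × k) (n : ℕ), gpow mul (0, 0) x n =
      ((n : k) * x.1 + x.2 ^ p ^ (r + 1) *
        ∑ j ∈ Finset.range n, ∑ i ∈ Finset.Ioo 0 p,
          ((p.choose i / p : ℕ) : k) * (j : k) ^ (p - i),
       (n : k) * x.2) := by
    intro x n
    induction n with
    | zero => simp [gpow]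
    | succ n ih =>
      rw [show gpow mul (0, 0) x (n + 1) = mul x (gpow mul (0, 0) x n) from rfl, ih, hmul]
      have hterm : ∀ i ∈ Finset.Ioo 0 p,
          ((p.choose i / p : ℕ) : k) * x.2 ^ (i * p ^ r) * ((n : k) * x.2) ^ ((p - i) * p ^ r)
          = x.2 ^ p ^ (r + 1) * (((p.choose i / p : ℕ) : k) * (n : k) ^ (p - i)) := by
        intro i hi
        simp only [Finset.mem_Ioo] at hi
        have e1 : ((n : k) * x.2) ^ ((p - i) * p ^ r)
            = (n : k) ^ (p - i) * x.2 ^ ((p - i) * p ^ r) := by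
          rw [mul_pow]; congr 1
          rw [mul_comm (p - i) (p ^ r), pow_mul, wg_cast_pow]
        have e2 : x.2 ^ (i * p ^ r) * x.2 ^ ((p - i) * p ^ r) = x.2 ^ p ^ (r + 1) := by
          rw [← pow_add]
          congr 1
          rw [← Nat.add_mul, show i + (p - i) = p from by omega, pow_succ]
          ring
        rw [e1]
        linear_combination (((p.choose i / p : ℕ) : k) * (n : k) ^ (p - i)) * e2
      have hsum : ∑ i ∈ Finset.Ioo 0 p,
          ((p.choose i / p : ℕ) : k) * x.2 ^ (i * p ^ r) * ((n : k) * x.2) ^ ((p - i) * p ^ r)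
          = x.2 ^ p ^ (r + 1) * ∑ i ∈ Finset.Ioo 0 p,
            ((p.choose i / p : ℕ) : k) * (n : k) ^ (p - i) := by
        rw [Finset.mul_sum]
        exact Finset.sum_congr rfl hterm
      simp only [Prod.mk.injEq]
      constructor
      · rw [hsum, Finset.sum_range_succ]
        push_cast
        ring
      · push_cast; ring
  have hP : p ^ (r + 1) ≠ 0 := by positivity
  have hSsq : ∑ j ∈ Finset.range (p ^ 2), ∑ i ∈ Finset.Ioo 0 p,
      ((p.choose i / p : ℕ) : k) * (j : k) ^ (p - i) = 0 := by
    rw [pow_two, wg_psi_sum_mul k p p, CharP.cast_eq_zero k p, neg_zero]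
  have hall : ∀ x : k × k, gpow mul (0, 0) x (p ^ 2) = (0, 0) := by
    intro x
    rw [key, hSsq]
    simp [CharP.cast_eq_zero k p]
  refine ⟨?_, ?_, ?_, hall⟩
  · intro x hx2
    refine ⟨hall x, ?_⟩
    intro j hj0 hj2 hcon
    rw [key] at hcon
    simp only [Prod.mk.injEq] at hcon
    obtain ⟨h1, h2⟩ := hcon
    have hjk : (j : k) = 0 := by
      rcases mul_eq_zero.mp h2 with h | h
      · exact h
      · exact absurd h hx2
    have hdvd : p ∣ j := (CharP.cast_eq_zero_iff k p j).mp hjk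
    obtain ⟨m, rfl⟩ := hdvd
    have hm0 : 0 < m := by
      rcases Nat.eq_zero_or_pos m with h | h
      · subst h; simp at hj0
      · exact h
    have hmp : m < p := by
      by_contra h
      push_neg at h
      have : p * p ≤ p * m := Nat.mul_le_mul_left p h
      have := pow_two p ▸ hj2
      omega
    rw [wg_psi_sum_mul k p m, hjk, zero_mul, zero_add] at h1
    have hm : (m : k) ≠ 0 := by
      rw [Ne, CharP.cast_eq_zero_iff k p m]
      intro hd
      exact absurd (Nat.le_of_dvd hm0 hd) (by omega)
    have hx2P : x.2 ^ p ^ (r + 1) ≠ 0 := pow_ne_zero _ hx2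
    have := mul_ne_zero hx2P (neg_ne_zero.mpr hm)
    exact this h1
  · intro x₁ hx1
    have hz : (0 : k) ^ p ^ (r + 1) = 0 := zero_pow hP
    constructor
    · rw [key]
      simp [hz, CharP.cast_eq_zero k p]
    · intro j hj0 hjp hcon
      rw [key] at hcon
      simp only [Prod.mk.injEq, hz, zero_mul, add_zero, mul_zero] at hcon
      have hjk : (j : k) = 0 := by
        rcases mul_eq_zero.mp hcon.1 with h | h
        · exact h
        · exact absurd h hx1
      have hdvd : p ∣ j := (CharP.cast_eq_zero_iff k p j).mp hjk
      have := Nat.le_of_dvd hj0 hdvd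
      omega
  · intro x y
    rw [hmul, hmul]
    simp only [Prod.mk.injEq]
    constructor
    · have hsym : ∑ i ∈ Finset.Ioo 0 p,
          ((p.choose i / p : ℕ) : k) * x.2 ^ (i * p ^ r) * y.2 ^ ((p - i) * p ^ r)
          = ∑ i ∈ Finset.Ioo 0 p,
          ((p.choose i / p : ℕ) : k) * y.2 ^ (i * p ^ r) * x.2 ^ ((p - i) * p ^ r) := by
        refine Finset.sum_nbij' (fun i => p - i) (fun i => p - i) ?_ ?_ ?_ ?_ ?_
        · intro i hi; simp at hi ⊢; omega
        · intro i hi; simp at hi ⊢; omega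
        · intro i hi; simp at hi ⊢; omega
        · intro i hi; simp at hi ⊢; omega
        · intro i hi
          simp only [Finset.mem_Ioo] at hi
          rw [show p - (p - i) = i from by omega, Nat.choose_symm (by omega)]
          ring
      rw [hsym]; ring
    · exact add_comm _ _
end

section
/- Let k be a field of characteristic p > 0 and let r < s be nonnegative integers, e₃ a p-power, e₂ a positive integer dividing e₃·p^r with e₂ and e₃ such that h₂ = (e₃/e₂)p^r is a p-power, and h₃ = p^s. Let G₀ be the group on k³ × k* built from β = 0 and G₁ the group built from β(x,y) = x^{p^r}y^{p^s} as in the Main Theorem (product on unipotent part: (x₁,x₂,x₃)(y₁,y₂,y₃) = (x₁+y₁+y₂^{h₂}x₃^{h₃}+β(x₃,y₃), x₂+y₂, x₃+y₃), torus acting diagonally with exponents e₁ = e₂h₂+e₃h₃, e₂, e₃). Then for any b₂, b₃ ∈ k*, the map (u₁,u₂,u₃,a) ↦ (b₂^{h₂}b₃^{p^s}u₁ + (b₃u₃)^{p^r+p^s}, b₂u₂ + (b₃u₃)^{e₂/e₃}, b₃u₃, a) is a group isomorphism from G₀ to G₁. -/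
/-!
`Φ` is the triangular change of coordinates `u₁ ↦ c u₁ + f (b₃ u₃)`, `u₂ ↦ b₂ u₂ + g (b₃ u₃)`,
`u₃ ↦ b₃ u₃` with `c = b₂^{h₂} b₃^{h₃}`, `f t = t ^ (p^r + p^s)` and `g t = t ^ q`. Such a map
carries the law with `β = 0` to the law with `β` as soon as `g` is additive, `f` and `g` are
homogeneous of the torus weights `e₁` and `e₂`, and the coboundary `f (x + y) - f x - f y` equals
`g(y)^{h₂} x^{h₃} + β x y`. In characteristic `p` this coboundary is
`x^{p^r} y^{p^s} + x^{p^s} y^{p^r}`, and its second term is `g(y)^{h₂} x^{h₃}` because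
`q h₂ = p^r`. Homogeneity holds because `e₂ = e₃ q` and `e₁ = e₂ h₂ + e₃ p^s = e₃ (p^r + p^s)`.
-/

section

variable {k : Type*}

def imprimitiveMul [Monoid k] [Add k] (e₁ e₂ e₃ h₂ h₃ : ℕ) (β : k → k → k)
    (x y : (k × k × k) × kˣ) : (k × k × k) × kˣ :=
  ((x.1.1 + (x.2 : k) ^ e₁ * y.1.1 + ((x.2 : k) ^ e₂ * y.1.2.1) ^ h₂ * x.1.2.2 ^ h₃
      + β x.1.2.2 ((x.2 : k) ^ e₃ * y.1.2.2),
    x.1.2.1 + (x.2 : k) ^ e₂ * y.1.2.1,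
    x.1.2.2 + (x.2 : k) ^ e₃ * y.1.2.2), x.2 * y.2)

def triangularMap [Monoid k] [Add k] (c b₂ b₃ : k) (f g : k → k) (x : (k × k × k) × kˣ) :
    (k × k × k) × kˣ :=
  ((c * x.1.1 + f (b₃ * x.1.2.2), b₂ * x.1.2.1 + g (b₃ * x.1.2.2), b₃ * x.1.2.2), x.2)

theorem triangularMap_bijective [Field k] {c b₂ b₃ : k} (hc : c ≠ 0) (hb₂ : b₂ ≠ 0)
    (hb₃ : b₃ ≠ 0) (f g : k → k) : Function.Bijective (triangularMap c b₂ b₃ f g) := by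
  refine Function.bijective_iff_has_inverse.2
    ⟨fun x => (((x.1.1 - f x.1.2.2) / c, (x.1.2.1 - g x.1.2.2) / b₂, x.1.2.2 / b₃), x.2),
      fun x => ?_, fun x => ?_⟩ <;>
  simp [triangularMap, mul_div_cancel₀, mul_div_cancel_left₀, *]

theorem triangularMap_imprimitiveMul [CommRing k] {e₁ e₂ e₃ h₂ h₃ : ℕ} {β : k → k → k}
    {f g : k → k} (b₂ b₃ : k) (hh₂_add : ∀ u v : k, (u + v) ^ h₂ = u ^ h₂ + v ^ h₂)
    (hg_add : ∀ u v, g (u + v) = g u + g v)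
    (hf_add : ∀ u v, f (u + v) = f u + f v + g v ^ h₂ * u ^ h₃ + β u v)
    (hg_smul : ∀ a u, g (a ^ e₃ * u) = a ^ e₂ * g u)
    (hf_smul : ∀ a u, f (a ^ e₃ * u) = a ^ e₁ * f u) (x y : (k × k × k) × kˣ) :
    triangularMap (b₂ ^ h₂ * b₃ ^ h₃) b₂ b₃ f g (imprimitiveMul e₁ e₂ e₃ h₂ h₃ 0 x y) =
      imprimitiveMul e₁ e₂ e₃ h₂ h₃ β (triangularMap (b₂ ^ h₂ * b₃ ^ h₃) b₂ b₃ f g x)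
        (triangularMap (b₂ ^ h₂ * b₃ ^ h₃) b₂ b₃ f g y) := by
  obtain ⟨⟨x₁, x₂, x₃⟩, a⟩ := x
  obtain ⟨⟨y₁, y₂, y₃⟩, b⟩ := y
  have hsplit : b₃ * (x₃ + (a : k) ^ e₃ * y₃) = b₃ * x₃ + (a : k) ^ e₃ * (b₃ * y₃) := by ring
  refine Prod.ext (Prod.ext ?_ (Prod.ext ?_ ?_)) rfl <;>
    simp only [triangularMap, imprimitiveMul, Pi.zero_apply, hsplit, hf_add, hg_add, hg_smul,
      hf_smul, mul_add, hh₂_add] <;> ring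

theorem add_pow_expChar_pow_add_expChar_pow [CommRing k] {p : ℕ} [ExpChar k p] (x y : k)
    (r s : ℕ) :
    (x + y) ^ (p ^ r + p ^ s) =
      x ^ (p ^ r + p ^ s) + y ^ (p ^ r + p ^ s) +
        (x ^ p ^ r * y ^ p ^ s + x ^ p ^ s * y ^ p ^ r) := by
  rw [pow_add, add_pow_expChar_pow, add_pow_expChar_pow]
  ring

end

theorem iso_beta_zero_to_monomial_general (k : Type*) [Field k] (p : ℕ) [Fact p.Prime] [CharP k p]
    (r s : ℕ)
    (w j : ℕ) (e₂ e₃ h₂ h₃ q e₁ : ℕ)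
    (hh₂ : h₂ = p ^ w) (hh₃ : h₃ = p ^ s)
    (he₂pos : 0 < e₂) (hdiv : h₂ * e₂ = e₃ * p ^ r)
    (hq : q = p ^ j) (hqdef : e₂ = e₃ * q)
    (he₁ : e₁ = e₂ * h₂ + e₃ * h₃)
    (mul₀ mul₁ : (k × k × k) × kˣ → (k × k × k) × kˣ → (k × k × k) × kˣ)
    (hmul₀ : ∀ x y : (k × k × k) × kˣ, mul₀ x y =
      ((x.1.1 + (x.2 : k) ^ e₁ * y.1.1 + ((x.2 : k) ^ e₂ * y.1.2.1) ^ h₂ * x.1.2.2 ^ h₃,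
        x.1.2.1 + (x.2 : k) ^ e₂ * y.1.2.1,
        x.1.2.2 + (x.2 : k) ^ e₃ * y.1.2.2), x.2 * y.2))
    (hmul₁ : ∀ x y : (k × k × k) × kˣ, mul₁ x y =
      ((x.1.1 + (x.2 : k) ^ e₁ * y.1.1 + ((x.2 : k) ^ e₂ * y.1.2.1) ^ h₂ * x.1.2.2 ^ h₃
          + x.1.2.2 ^ p ^ r * ((x.2 : k) ^ e₃ * y.1.2.2) ^ p ^ s,
        x.1.2.1 + (x.2 : k) ^ e₂ * y.1.2.1,
        x.1.2.2 + (x.2 : k) ^ e₃ * y.1.2.2), x.2 * y.2))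
    (b₂ b₃ : k) (hb₂ : b₂ ≠ 0) (hb₃ : b₃ ≠ 0)
    (Φ : (k × k × k) × kˣ → (k × k × k) × kˣ)
    (hΦ : Φ = fun x : (k × k × k) × kˣ =>
      ((b₂ ^ h₂ * b₃ ^ p ^ s * x.1.1 + (b₃ * x.1.2.2) ^ (p ^ r + p ^ s),
        b₂ * x.1.2.1 + (b₃ * x.1.2.2) ^ q,
        b₃ * x.1.2.2), x.2)) :
    Function.Bijective Φ ∧ ∀ x y : (k × k × k) × kˣ, Φ (mul₀ x y) = mul₁ (Φ x) (Φ y) := by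
  have hqh₂ : q * h₂ = p ^ r := by
    refine Nat.eq_of_mul_eq_mul_left (Nat.pos_of_mul_pos_right (hqdef ▸ he₂pos)) ?_
    rw [← hdiv, hqdef]
    ring
  have he₁' : e₁ = e₃ * (p ^ r + p ^ s) := by rw [he₁, mul_comm e₂, hdiv, hh₃, mul_add]
  subst hh₂ hh₃ hq hΦ
  have hmul₀' : mul₀ = imprimitiveMul e₁ e₂ e₃ (p ^ w) (p ^ s) 0 := by
    funext x y
    simp [hmul₀, imprimitiveMul]
  have hmul₁' :
      mul₁ = imprimitiveMul e₁ e₂ e₃ (p ^ w) (p ^ s) (fun u v => u ^ p ^ r * v ^ p ^ s) := by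
    funext x y
    simp [hmul₁, imprimitiveMul]
  refine ⟨triangularMap_bijective (by positivity) hb₂ hb₃ _ _, fun x y => ?_⟩
  rw [hmul₀', hmul₁']
  refine triangularMap_imprimitiveMul (f := fun t => t ^ (p ^ r + p ^ s))
    (g := fun t => t ^ p ^ j) b₂ b₃ (add_pow_char_pow · · p w) (add_pow_char_pow · · p j)
    (fun u v => ?_) (fun a u => ?_) (fun a u => ?_) x y
  · rw [add_pow_expChar_pow_add_expChar_pow, ← pow_mul, hqh₂]
    ring
  · rw [mul_pow, ← pow_mul, hqdef]
  · rw [mul_pow, ← pow_mul, he₁']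

/-- The explicit isomorphism `(14.1)` between the `(2,2)`-imprimitive group built
from `β = 0` and the one built from `β(x,y) = x^{p^r} y^{p^s}`, when
`h₂ = (e₃/e₂) p^r` and `h₃ = p^s`. -/
theorem iso_beta_zero_to_monomial (k : Type*) [Field k] (p : ℕ) [Fact p.Prime] [CharP k p]
    (r s : ℕ) (hrs : r < s)
    (t w j : ℕ) (e₂ e₃ h₂ h₃ q e₁ : ℕ)
    (he₃ : e₃ = p ^ t) (hh₂ : h₂ = p ^ w) (hh₃ : h₃ = p ^ s)
    (he₂pos : 0 < e₂) (hdiv : h₂ * e₂ = e₃ * p ^ r)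
    (hq : q = p ^ j) (hqdef : e₂ = e₃ * q)
    (he₁ : e₁ = e₂ * h₂ + e₃ * h₃)
    (mul₀ mul₁ : (k × k × k) × kˣ → (k × k × k) × kˣ → (k × k × k) × kˣ)
    (hmul₀ : ∀ x y : (k × k × k) × kˣ, mul₀ x y =
      ((x.1.1 + (x.2 : k) ^ e₁ * y.1.1 + ((x.2 : k) ^ e₂ * y.1.2.1) ^ h₂ * x.1.2.2 ^ h₃,
        x.1.2.1 + (x.2 : k) ^ e₂ * y.1.2.1,
        x.1.2.2 + (x.2 : k) ^ e₃ * y.1.2.2), x.2 * y.2))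
    (hmul₁ : ∀ x y : (k × k × k) × kˣ, mul₁ x y =
      ((x.1.1 + (x.2 : k) ^ e₁ * y.1.1 + ((x.2 : k) ^ e₂ * y.1.2.1) ^ h₂ * x.1.2.2 ^ h₃
          + x.1.2.2 ^ p ^ r * ((x.2 : k) ^ e₃ * y.1.2.2) ^ p ^ s,
        x.1.2.1 + (x.2 : k) ^ e₂ * y.1.2.1,
        x.1.2.2 + (x.2 : k) ^ e₃ * y.1.2.2), x.2 * y.2))
    (b₂ b₃ : k) (hb₂ : b₂ ≠ 0) (hb₃ : b₃ ≠ 0)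
    (Φ : (k × k × k) × kˣ → (k × k × k) × kˣ)
    (hΦ : Φ = fun x : (k × k × k) × kˣ =>
      ((b₂ ^ h₂ * b₃ ^ p ^ s * x.1.1 + (b₃ * x.1.2.2) ^ (p ^ r + p ^ s),
        b₂ * x.1.2.1 + (b₃ * x.1.2.2) ^ q,
        b₃ * x.1.2.2), x.2)) :
    Function.Bijective Φ ∧ ∀ x y : (k × k × k) × kˣ, Φ (mul₀ x y) = mul₁ (Φ x) (Φ y) :=
  iso_beta_zero_to_monomial_general k p r s w j e₂ e₃ h₂ h₃ q e₁ hh₂ hh₃ he₂pos hdiv hq hqdef he₁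
    mul₀ mul₁ hmul₀ hmul₁ b₂ b₃ hb₂ hb₃ Φ hΦ
end

section
/- Let k be an infinite field of characteristic p ≥ 0 and suppose there exist polynomials β, β' ∈ k[x,y] vanishing on the axes with δ²(β) = δ²(β') = 0, and suppose β = 0 while β' is homogeneous of degree d > 0. If there exists b₁, b₃ ∈ k* and a polynomial f₁ ∈ k[T] such that δ¹(f₁)(x,y) = −β'(b₃x, b₃y) for all x, y ∈ k, then β' is a 2-coboundary, i.e. β'(x,y) = g(x+y) − g(x) − g(y) for some polynomial g. In particular, if p > 0 and β'(x,y) = Σ_{i=1}^{p-1}(1/p)C(p,i)x^{ip^r}y^{(p−i)p^r} (the Witt cocycle), no such f₁ exists. -/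
lemma witt_int_sum (p : ℕ) (hp : p.Prime) :
    (∑ j ∈ Finset.range p, ∑ i ∈ Finset.Ioo 0 p, ((p.choose i / p : ℕ) : ℤ) * (j : ℤ) ^ i)
      = (p : ℤ) ^ (p - 1) - 1 := by
  have hp0 : (p : ℤ) ≠ 0 := by exact_mod_cast hp.pos.ne'
  apply mul_left_cancel₀ hp0
  have inner : ∀ j : ℕ, (p : ℤ) * ∑ i ∈ Finset.Ioo 0 p, ((p.choose i / p : ℕ) : ℤ) * (j : ℤ) ^ i
      = ((j : ℤ) + 1) ^ p - 1 - (j : ℤ) ^ p := by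
    intro j
    rw [Finset.mul_sum]
    have h1 : ∀ i ∈ Finset.Ioo 0 p, (p : ℤ) * (((p.choose i / p : ℕ) : ℤ) * (j : ℤ) ^ i)
        = ((p.choose i : ℕ) : ℤ) * (j : ℤ) ^ i := by
      intro i hi
      simp only [Finset.mem_Ioo] at hi
      rw [← mul_assoc, ← Int.natCast_mul, Nat.mul_div_cancel' (hp.dvd_choose_self hi.1.ne' hi.2)]
    rw [Finset.sum_congr rfl h1]
    have expand : ((j : ℤ) + 1) ^ p = ∑ i ∈ Finset.range (p + 1), (j : ℤ) ^ i * 1 ^ (p - i) * (p.choose i : ℤ) := add_pow _ _ _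
    rw [Finset.sum_range_succ, Finset.range_eq_Ico,
      Finset.sum_eq_sum_Ico_succ_bot hp.pos] at expand
    simp only [one_pow, pow_zero, Nat.choose_zero_right, Nat.choose_self, Nat.cast_one,
      one_mul, mul_one] at expand
    have h2 : (Finset.Ioo 0 p : Finset ℕ) = Finset.Ico 1 p := rfl
    have h4 : ∑ i ∈ Finset.Ico 1 p, ((p.choose i : ℕ) : ℤ) * (j:ℤ) ^ i
        = ∑ i ∈ Finset.Ico 1 p, (j : ℤ) ^ i * (p.choose i : ℤ) := by
      apply Finset.sum_congr rfl; intros; ring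
    rw [h2, h4]
    rw [expand]; ring
  rw [Finset.mul_sum, Finset.sum_congr rfl (fun j _ => inner j)]
  have tel : ∑ j ∈ Finset.range p, (((j:ℤ)+1)^p - (j:ℤ)^p) = (p:ℤ)^p - 0^p := by
    have := Finset.sum_range_sub (fun j : ℕ => (j : ℤ) ^ p) p
    simp only [Nat.cast_add, Nat.cast_one, Nat.cast_zero] at this
    exact this
  have split : ∑ j ∈ Finset.range p, (((j:ℤ)+1)^p - 1 - (j:ℤ)^p)
      = (∑ j ∈ Finset.range p, (((j:ℤ)+1)^p - (j:ℤ)^p)) - (∑ _j ∈ Finset.range p, (1:ℤ)) := by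
    rw [← Finset.sum_sub_distrib]
    apply Finset.sum_congr rfl; intros; ring
  rw [split, tel]
  have hzero : (0:ℤ)^p = 0 := zero_pow hp.pos.ne'
  have hpow : (p:ℤ) * (p:ℤ)^(p-1) = (p:ℤ)^p := by
    have h5 : (p:ℤ)^p = (p:ℤ)^(p-1+1) := by rw [Nat.sub_add_cancel hp.one_le]
    rw [h5, pow_succ]; ring
  simp [hzero, Finset.sum_const, Finset.card_range]
  linarith [hpow]

lemma witt_zmod_sum (p r : ℕ) [hp : Fact p.Prime] :
    (∑ j ∈ Finset.range p, ∑ i ∈ Finset.Ioo 0 p,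
        ((p.choose i / p : ℕ) : ZMod p) * (j : ZMod p) ^ (i * p ^ r)) = -1 := by
  have hred : ∀ (j : ℕ) (i : ℕ), (j : ZMod p) ^ (i * p ^ r) = (j : ZMod p) ^ i := by
    intro j i
    rw [mul_comm, pow_mul, ZMod.pow_card_pow]
  have h1 : (∑ j ∈ Finset.range p, ∑ i ∈ Finset.Ioo 0 p,
        ((p.choose i / p : ℕ) : ZMod p) * (j : ZMod p) ^ (i * p ^ r))
      = ((∑ j ∈ Finset.range p, ∑ i ∈ Finset.Ioo 0 p,
        ((p.choose i / p : ℕ) : ℤ) * (j : ℤ) ^ i : ℤ) : ZMod p) := by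
    rw [Int.cast_sum]
    refine Finset.sum_congr rfl fun j _ => ?_
    rw [Int.cast_sum]
    refine Finset.sum_congr rfl fun i _ => ?_
    rw [hred, Int.cast_mul, Int.cast_pow, Int.cast_natCast, Int.cast_natCast]
  rw [h1, witt_int_sum p hp.out]
  push_cast
  rw [ZMod.natCast_self]
  rw [zero_pow (Nat.sub_ne_zero_of_lt hp.out.one_lt)]
  ring

/-- If a homogeneous 2-cocycle `β'` (vanishing on the axes) of positive degree
admits an `f₁` with `δ¹(f₁)(x,y) = -β'(b₃x, b₃y)`, then `β'` is a 2-coboundary;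
in particular this is impossible for the Witt cocycle. -/
theorem coboundary_from_delta1_identity (k : Type*) [Field k] [Infinite k]
    (p : ℕ) [CharP k p]
    (β β' : k → k → k) (hβ : β = fun _ _ => (0 : k))
    (d : ℕ) (hd : 0 < d)
    (hhom : ∃ P : MvPolynomial (Fin 2) k, P.IsHomogeneous d ∧
      ∀ x y : k, β' x y = MvPolynomial.eval ![x, y] P)
    (hax₁ : ∀ x : k, β' x 0 = 0) (hax₂ : ∀ y : k, β' 0 y = 0)
    (hcoc : ∀ z₁ z₂ z₃ : k, delta2 (fun z : k × k => β' z.1 z.2) z₁ z₂ z₃ = 0)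
    (hf : ∃ b₁ b₃ : k, b₁ ≠ 0 ∧ b₃ ≠ 0 ∧ ∃ f₁ : Polynomial k,
      ∀ x y : k, f₁.eval (x + y) - f₁.eval x - f₁.eval y = -β' (b₃ * x) (b₃ * y)) :
    (∃ g : Polynomial k, ∀ x y : k, β' x y = g.eval (x + y) - g.eval x - g.eval y) ∧
    (∀ r : ℕ, 0 < p →
      (β' = fun x y => ∑ i ∈ Finset.Ioo 0 p,
        ((p.choose i / p : ℕ) : k) * x ^ (i * p ^ r) * y ^ ((p - i) * p ^ r)) → False) := by
  obtain ⟨b₁, b₃, hb₁, hb₃, f₁, hf₁⟩ := hf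
  set g : Polynomial k := -(f₁.comp (Polynomial.C b₃⁻¹ * Polynomial.X)) with hgdef
  have hgev : ∀ t : k, g.eval t = -(f₁.eval (b₃⁻¹ * t)) := by
    intro t; simp [hgdef, Polynomial.eval_comp]
  have hg : ∀ x y : k, β' x y = g.eval (x + y) - g.eval x - g.eval y := by
    intro x y
    have h := hf₁ (b₃⁻¹ * x) (b₃⁻¹ * y)
    rw [mul_inv_cancel_left₀ hb₃, mul_inv_cancel_left₀ hb₃] at h
    rw [hgev, hgev, hgev, mul_add]
    linear_combination h
  refine ⟨⟨g, hg⟩, ?_⟩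
  intro r hp hW
  haveI : NeZero p := ⟨hp.ne'⟩
  haveI hfp : Fact p.Prime := CharP.char_is_prime_of_pos k p
  -- the sum S := ∑_{j<p} β' j 1
  -- telescoping computation: S = 0
  have hS0 : ∑ j ∈ Finset.range p, β' (j : k) 1 = 0 := by
    have e1 : ∀ j : ℕ, β' (j : k) 1
        = (g.eval ((j+1 : ℕ) : k) - g.eval ((j : ℕ) : k)) - g.eval 1 := by
      intro j
      rw [hg]
      push_cast
      ring
    rw [Finset.sum_congr rfl fun j _ => e1 j, Finset.sum_sub_distrib,
      Finset.sum_range_sub (fun j : ℕ => g.eval ((j : ℕ) : k)) p]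
    simp [CharP.cast_eq_zero k p, Finset.sum_const, Finset.card_range,
      nsmul_eq_mul]
  -- Witt computation: S = -1
  have hS1 : ∑ j ∈ Finset.range p, β' (j : k) 1 = -1 := by
    have e2 : ∀ j : ℕ, β' (j : k) 1
        = ∑ i ∈ Finset.Ioo 0 p, ((p.choose i / p : ℕ) : k) * (j : k) ^ (i * p ^ r) := by
      intro j
      rw [hW]
      simp
    rw [Finset.sum_congr rfl fun j _ => e2 j]
    have hmap : ∑ j ∈ Finset.range p, ∑ i ∈ Finset.Ioo 0 p,
          ((p.choose i / p : ℕ) : k) * (j : k) ^ (i * p ^ r)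
        = (ZMod.castHom (dvd_refl p) k) (∑ j ∈ Finset.range p, ∑ i ∈ Finset.Ioo 0 p,
          ((p.choose i / p : ℕ) : ZMod p) * (j : ZMod p) ^ (i * p ^ r)) := by
      rw [map_sum]
      refine Finset.sum_congr rfl fun j _ => ?_
      rw [map_sum]
      refine Finset.sum_congr rfl fun i _ => ?_
      rw [map_mul, map_pow, map_natCast, map_natCast]
    rw [hmap, witt_zmod_sum p r, map_neg, map_one]
  rw [hS0] at hS1
  exact one_ne_zero (neg_eq_zero.mp hS1.symm)
end

section
/- Let k be a field of characteristic p > 0 and let a, b, c be powers of p with b ≠ c. If there exists a polynomial β ∈ k[x,y] with β(0,y) = β(x,0) = 0 such that δ²(β)(z₁,z₂,z₃) = z₁^a z₂^b z₃^c as polynomials, then a = b or a = c. -/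
open MvPolynomial

lemma aeval_aeval_pair {k : Type*} [CommRing k] (v : Fin 3 → MvPolynomial (Fin 3) k)
    (s t : MvPolynomial (Fin 3) k) (β : MvPolynomial (Fin 2) k) :
    aeval v (aeval ![s, t] β) = aeval ![aeval v s, aeval v t] β := by
  rw [← AlgHom.comp_apply, comp_aeval]
  have : (fun i => aeval v (![s, t] i)) = ![aeval v s, aeval v t] := by
    funext i; fin_cases i <;> simp
  rw [this]

noncomputable def asym {k : Type*} [CommRing k] (F : MvPolynomial (Fin 3) k) :
    MvPolynomial (Fin 3) k :=
  aeval ![X 0, X 1, X 2] F - aeval ![X 0, X 2, X 1] F - aeval ![X 1, X 0, X 2] F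
    + aeval ![X 1, X 2, X 0] F + aeval ![X 2, X 0, X 1] F - aeval ![X 2, X 1, X 0] F

lemma asym_polyDelta2 {k : Type*} [CommRing k] (β : MvPolynomial (Fin 2) k) :
    asym (polyDelta2 β) = 0 := by
  simp only [asym, polyDelta2, map_add, map_sub, aeval_aeval_pair, aeval_X]
  simp only [Matrix.cons_val_zero, Matrix.cons_val_one, Matrix.head_cons, Matrix.cons_val_two,
    Matrix.tail_cons]
  ring_nf

lemma fs_ne {a b c a' b' c' : ℕ} (h : ¬(a = a' ∧ b = b' ∧ c = c')) :
    (Finsupp.single (0 : Fin 3) a + Finsupp.single 1 b + Finsupp.single 2 c)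
      ≠ (Finsupp.single 0 a' + Finsupp.single 1 b' + Finsupp.single 2 c') := by
  intro h'
  apply h
  refine ⟨?_, ?_, ?_⟩
  · simpa [Finsupp.single_apply] using DFunLike.congr_fun h' 0
  · simpa [Finsupp.single_apply] using DFunLike.congr_fun h' 1
  · simpa [Finsupp.single_apply] using DFunLike.congr_fun h' 2

lemma asym_monomial_ne_zero (k : Type*) [Field k] (a b c : ℕ) (hab : a ≠ b) (hac : a ≠ c) (hbc : b ≠ c) :
    asym ((X 0 : MvPolynomial (Fin 3) k) ^ a * X 1 ^ b * X 2 ^ c) ≠ 0 := by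
  intro h
  have := congrArg (coeff (Finsupp.single (0 : Fin 3) a + Finsupp.single 1 b + Finsupp.single 2 c)) h
  simp only [asym, map_mul, map_pow, aeval_X, Matrix.cons_val_zero, Matrix.cons_val_one,
    Matrix.head_cons, Matrix.cons_val_two, Matrix.tail_cons] at this
  simp only [X_pow_eq_monomial, monomial_mul, one_mul, coeff_sub, coeff_add, coeff_monomial,
    coeff_zero] at this
  simp only [if_true] at this
  have n1 : (Finsupp.single (0:Fin 3) a + Finsupp.single 2 b + Finsupp.single 1 c)
      ≠ (Finsupp.single 0 a + Finsupp.single 1 b + Finsupp.single 2 c) := by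
    intro h'; have e := DFunLike.congr_fun h' 2; simp [Finsupp.single_apply] at e; exact hbc e
  have n2 : (Finsupp.single (1:Fin 3) a + Finsupp.single 0 b + Finsupp.single 2 c)
      ≠ (Finsupp.single 0 a + Finsupp.single 1 b + Finsupp.single 2 c) := by
    intro h'; have e := DFunLike.congr_fun h' 0; simp [Finsupp.single_apply] at e; exact hab e.symm
  have n3 : (Finsupp.single (1:Fin 3) a + Finsupp.single 2 b + Finsupp.single 0 c)
      ≠ (Finsupp.single 0 a + Finsupp.single 1 b + Finsupp.single 2 c) := by
    intro h'; have e := DFunLike.congr_fun h' 0; simp [Finsupp.single_apply] at e; exact hac e.symm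
  have n4 : (Finsupp.single (2:Fin 3) a + Finsupp.single 0 b + Finsupp.single 1 c)
      ≠ (Finsupp.single 0 a + Finsupp.single 1 b + Finsupp.single 2 c) := by
    intro h'; have e := DFunLike.congr_fun h' 0; simp [Finsupp.single_apply] at e; exact hab e.symm
  have n5 : (Finsupp.single (2:Fin 3) a + Finsupp.single 1 b + Finsupp.single 0 c)
      ≠ (Finsupp.single 0 a + Finsupp.single 1 b + Finsupp.single 2 c) := by
    intro h'; have e := DFunLike.congr_fun h' 0; simp [Finsupp.single_apply] at e; exact hac e.symm
  rw [if_neg n1, if_neg n2, if_neg n3, if_neg n4, if_neg n5] at this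
  norm_num at this

/-- If `a, b, c` are `p`-powers with `b ≠ c` and some polynomial `β ∈ k[x,y]`
vanishing on the axes satisfies `δ²(β) = z₁^a z₂^b z₃^c` as polynomials,
then `a = b` or `a = c`. -/
theorem exponent_constraint_of_cocycle_identity (k : Type*) [Field k] (p : ℕ)
    [Fact p.Prime] [CharP k p]
    (u v w : ℕ) (a b c : ℕ) (ha : a = p ^ u) (hb : b = p ^ v) (hc : c = p ^ w)
    (hbc : b ≠ c)
    (hex : ∃ β : MvPolynomial (Fin 2) k,
      aeval ![(0 : MvPolynomial (Fin 2) k), X 1] β = 0 ∧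
      aeval ![X 0, (0 : MvPolynomial (Fin 2) k)] β = 0 ∧
      polyDelta2 β = X 0 ^ a * X 1 ^ b * X 2 ^ c) :
    a = b ∨ a = c := by
  by_contra hcon
  push_neg at hcon
  obtain ⟨hab, hac⟩ := hcon
  obtain ⟨β, -, -, hδ⟩ := hex
  exact asym_monomial_ne_zero k a b c hab hac hbc (hδ ▸ asym_polyDelta2 β)
end
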